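/- Let m ≥ 2, 1 ≤ p ≤ q < ∞, and 1 ≤ pᵢ ≤ qᵢ < ∞ for i = 1, …, m. Suppose 1/p* := Σ_{i=1}^m 1/pᵢ ≤ 1/p and Σ_{i=1}^m 1/qᵢ = 1/q. Then for all measurable functions fᵢ ∈ w𝓜^{pᵢ}_{qᵢ}(ℝⁿ), i = 1, …, m, one has ‖∏_{i=1}^m fᵢ‖_{w𝓜^p_q} ≤ ∏_{i=1}^m (pᵢ/p*)^{1/pᵢ} · ∏_{i=1}^m ‖fᵢ‖_{w𝓜^{pᵢ}_{qᵢ}}. -/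

import Mathlib

/-!
If `|∏ fᵢ(x)| > γ` and `∏ γᵢ = γ`, then `|fᵢ(x)| > γᵢ` for some `i`, so the level sets of the
product are controlled by a union bound. With `νᵢ` the weak `L^{pᵢ}` norm of `fᵢ` on a ball, the
choice `γᵢ = νᵢ cᵢ`, `cᵢ^{pᵢ} = (pᵢ/p*) λ^{p*}`, `λ = γ / (C ∏ νᵢ)` balances the terms and gives
`|{|∏ fᵢ| > γ}| ≤ ∑ (p*/pᵢ) λ^{-p*} = (C ∏ νᵢ / γ)^{p*}` with `C = ∏ (pᵢ/p*)^{1/pᵢ}`: a weak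
Hölder inequality into `L^{p*,∞}`. On a ball `B`, `L^{p*,∞}(B)` embeds into `L^{p,∞}(B)` with
factor `|B|^{1/p - 1/p*}`, and since `∑ 1/qᵢ = 1/q` the remaining power of `|B|` splits as
`∏ |B|^{1/qᵢ - 1/pᵢ}`, one Morrey factor per `fᵢ`.
-/

open MeasureTheory ENNReal

/-- The weak Lebesgue `L^{p,∞}(B)` quasinorm of `f` on a set `B ⊆ ℝⁿ`:
`sup_{γ>0} γ · |{x ∈ B : |f x| > γ}|^{1/p}`. -/
noncomputable def weakLpNorm {n : ℕ} (p : ℝ) (B : Set (Fin n → ℝ))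
    (f : (Fin n → ℝ) → ℝ) : ℝ≥0∞ :=
  ⨆ γ : Set.Ioi (0 : ℝ),
    ENNReal.ofReal γ.1 * (volume {x ∈ B | γ.1 < |f x|}) ^ (1 / p)

/-- The weak Morrey `w𝓜^p_q(ℝⁿ)` quasinorm of `f`:
`sup_{B = B(a,r), γ>0} |B|^{1/q - 1/p} · γ · |{x ∈ B : |f x| > γ}|^{1/p}`. -/
noncomputable def weakMorreyNorm {n : ℕ} (p q : ℝ) (f : (Fin n → ℝ) → ℝ) : ℝ≥0∞ :=
  ⨆ (a : Fin n → ℝ) (r : Set.Ioi (0 : ℝ)),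
    (volume (Metric.ball a r.1)) ^ (1 / q - 1 / p) * weakLpNorm p (Metric.ball a r.1) f

theorem ENNReal.rpow_sum_of_ne_zero_of_ne_top {ι : Type*} (s : Finset ι) {x : ℝ≥0∞}
    (hx : x ≠ 0) (hx' : x ≠ ⊤) (g : ι → ℝ) :
    x ^ (∑ i ∈ s, g i) = ∏ i ∈ s, x ^ g i := by
  induction s using Finset.cons_induction with
  | empty => simp
  | cons i s hi ih => rw [Finset.sum_cons, Finset.prod_cons, ENNReal.rpow_add _ _ hx hx', ih]

theorem pos_of_one_div_eq_sum_one_div {ι : Type*} [Fintype ι] [Nonempty ι] {P : ι → ℝ}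
    {pstar : ℝ} (hP : ∀ i, 0 < P i) (hpstar : 1 / pstar = ∑ i, 1 / P i) : 0 < pstar :=
  one_div_pos.mp <| hpstar ▸ Finset.sum_pos (fun i _ => one_div_pos.mpr (hP i))
    Finset.univ_nonempty

theorem setOf_lt_abs_prod_subset_iUnion {α ι : Type*} [Fintype ι] (s : Set α)
    (f : ι → α → ℝ) (c : ι → ℝ) :
    {x ∈ s | ∏ i, c i < |∏ i, f i x|} ⊆ ⋃ i, {x ∈ s | c i < |f i x|} := by
  rintro x ⟨hxs, hx⟩
  by_contra hx'
  simp only [Set.mem_iUnion, not_exists] at hx'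
  refine hx.not_ge ?_
  rw [Finset.abs_prod]
  exact Finset.prod_le_prod (fun i _ => abs_nonneg _) fun i _ => not_lt.mp fun h => hx' i ⟨hxs, h⟩

theorem measure_lt_abs_prod_le {α ι : Type*} [MeasurableSpace α] [Fintype ι] [Nonempty ι]
    (μ : Measure α) (s : Set α) (f : ι → α → ℝ) {P ν : ι → ℝ} {pstar : ℝ}
    (hP : ∀ i, 0 < P i) (hν : ∀ i, 0 < ν i) (hpstar : 1 / pstar = ∑ i, 1 / P i)
    (hf : ∀ i, ∀ γ > 0, μ {x ∈ s | γ < |f i x|} ≤ ENNReal.ofReal ((ν i / γ) ^ P i))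
    {γ : ℝ} (hγ : 0 < γ) :
    μ {x ∈ s | γ < |∏ i, f i x|} ≤
      ENNReal.ofReal (((∏ i, (P i / pstar) ^ (1 / P i)) * (∏ i, ν i) / γ) ^ pstar) := by
  have hpstar_pos := pos_of_one_div_eq_sum_one_div hP hpstar
  set C := ∏ i, (P i / pstar) ^ (1 / P i)
  have hC : 0 < C := Finset.prod_pos fun i _ => by have := hP i; positivity
  have hν_prod : 0 < ∏ i, ν i := Finset.prod_pos fun i _ => hν i
  set lam := γ / (C * ∏ i, ν i)
  have hlam : 0 < lam := by positivity
  set c : ι → ℝ := fun i => (P i / pstar * lam ^ pstar) ^ (1 / P i)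
  have hc : ∀ i, 0 < c i := fun i => by have := hP i; positivity
  have hc_pow : ∀ i, c i ^ P i = P i / pstar * lam ^ pstar := fun i => by
    have := hP i
    simp only [c, one_div]
    rw [Real.rpow_inv_rpow (by positivity) this.ne']
  have hc_prod : ∏ i, c i = C * lam := by
    simp only [c]
    simp_rw [Real.mul_rpow (div_pos (hP _) hpstar_pos).le (by positivity : 0 ≤ lam ^ pstar)]
    rw [Finset.prod_mul_distrib, ← Real.rpow_sum_of_pos (by positivity), ← hpstar,
      ← Real.rpow_mul hlam.le, mul_one_div_cancel hpstar_pos.ne', Real.rpow_one]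
  have hthreshold : ∏ i, ν i * c i = γ := by
    rw [Finset.prod_mul_distrib, hc_prod]
    simp only [lam]
    field_simp
  have hlevel : ∀ i, (ν i / (ν i * c i)) ^ P i = pstar / P i * (lam ^ pstar)⁻¹ := fun i => by
    have := hP i
    rw [div_mul_cancel_left₀ (hν i).ne', ← one_div, Real.div_rpow zero_le_one (hc i).le,
      hc_pow, Real.one_rpow]
    field_simp
  calc μ {x ∈ s | γ < |∏ i, f i x|}
      ≤ μ (⋃ i, {x ∈ s | ν i * c i < |f i x|}) := by
        rw [← hthreshold]
        exact measure_mono (setOf_lt_abs_prod_subset_iUnion s f _)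
    _ ≤ ∑ i, μ {x ∈ s | ν i * c i < |f i x|} := measure_iUnion_fintype_le _ _
    _ ≤ ∑ i, ENNReal.ofReal (pstar / P i * (lam ^ pstar)⁻¹) := Finset.sum_le_sum fun i _ =>
        hlevel i ▸ hf i _ (mul_pos (hν i) (hc i))
    _ = ENNReal.ofReal ((C * (∏ i, ν i) / γ) ^ pstar) := by
        rw [← ENNReal.ofReal_sum_of_nonneg fun i _ => by have := hP i; positivity,
          ← Finset.sum_mul]
        congr 1
        simp_rw [div_eq_mul_one_div pstar]
        rw [← Finset.mul_sum, ← hpstar, mul_one_div_cancel hpstar_pos.ne', one_mul,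
          ← Real.inv_rpow hlam.le]
        simp only [lam, inv_div]

section WeakLp

variable {n : ℕ} {p : ℝ} {B : Set (Fin n → ℝ)} {f : (Fin n → ℝ) → ℝ}

theorem ofReal_mul_volume_rpow_le_weakLpNorm {γ : ℝ} (hγ : 0 < γ) :
    ENNReal.ofReal γ * volume {x ∈ B | γ < |f x|} ^ (1 / p) ≤ weakLpNorm p B f :=
  le_iSup (fun γ : Set.Ioi (0 : ℝ) => ENNReal.ofReal γ.1 * volume {x ∈ B | γ.1 < |f x|} ^ (1 / p))
    ⟨γ, hγ⟩

theorem volume_lt_abs_le_of_weakLpNorm_le {ν γ : ℝ} (hp : 0 < p) (hν : 0 ≤ ν) (hγ : 0 < γ)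
    (h : weakLpNorm p B f ≤ ENNReal.ofReal ν) :
    volume {x ∈ B | γ < |f x|} ≤ ENNReal.ofReal ((ν / γ) ^ p) := by
  have hle : volume {x ∈ B | γ < |f x|} ^ p⁻¹ ≤ ENNReal.ofReal (ν / γ) := by
    rw [ENNReal.ofReal_div_of_pos hγ, ENNReal.le_div_iff_mul_le (by simp [hγ]) (by simp),
      mul_comm, ← one_div]
    exact (ofReal_mul_volume_rpow_le_weakLpNorm hγ).trans h
  rw [ENNReal.rpow_inv_le_iff hp] at hle
  rwa [ENNReal.ofReal_rpow_of_nonneg (by positivity) hp.le] at hle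

theorem weakLpNorm_le_of_volume_lt_abs_le {ν : ℝ} (hp : 0 < p) (hν : 0 ≤ ν)
    (h : ∀ γ > 0, volume {x ∈ B | γ < |f x|} ≤ ENNReal.ofReal ((ν / γ) ^ p)) :
    weakLpNorm p B f ≤ ENNReal.ofReal ν := by
  refine iSup_le fun ⟨γ, hγ⟩ => ?_
  have hγ : 0 < γ := hγ
  calc ENNReal.ofReal γ * volume {x ∈ B | γ < |f x|} ^ (1 / p)
      ≤ ENNReal.ofReal γ * ENNReal.ofReal ((ν / γ) ^ p) ^ (1 / p) := by
        gcongr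
        exact h γ hγ
    _ = ENNReal.ofReal ν := by
        rw [ENNReal.ofReal_rpow_of_nonneg (by positivity) (by positivity), one_div,
          Real.rpow_rpow_inv (by positivity) hp.ne', ← ENNReal.ofReal_mul hγ.le,
          mul_div_cancel₀ _ hγ.ne']

theorem weakLpNorm_eq_zero_iff (hp : 0 < p) :
    weakLpNorm p B f = 0 ↔ volume {x ∈ B | f x ≠ 0} = 0 := by
  constructor
  · intro h
    have hlevel : ∀ δ > 0, volume {x ∈ B | δ < |f x|} = 0 := fun δ hδ => by
      have := (ofReal_mul_volume_rpow_le_weakLpNorm (p := p) hδ).trans_eq h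
      simpa [hδ.not_ge, hp, hp.not_gt] using this
    refine measure_mono_null ?_
      (measure_iUnion_null fun k : ℕ => hlevel (1 / ((k : ℝ) + 1)) Nat.one_div_pos_of_nat)
    rintro x ⟨hxB, hx⟩
    obtain ⟨k, hk⟩ := exists_nat_one_div_lt (abs_pos.mpr hx)
    exact Set.mem_iUnion.mpr ⟨k, hxB, hk⟩
  · intro h
    refine le_antisymm (iSup_le fun ⟨γ, hγ⟩ => ?_) bot_le
    have hnull : volume {x ∈ B | γ < |f x|} = 0 := by
      refine measure_mono_null ?_ h
      rintro x ⟨hxB, hx⟩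
      exact ⟨hxB, abs_pos.mp ((Set.mem_Ioi.mp hγ).trans hx)⟩
    simp [hnull, hp]

theorem weakLpNorm_le_rpow_mul_weakLpNorm {s : ℝ} (hs : 0 ≤ 1 / s) (hsp : 1 / s ≤ 1 / p) :
    weakLpNorm p B f ≤ volume B ^ (1 / p - 1 / s) * weakLpNorm s B f := by
  rw [weakLpNorm, weakLpNorm, ENNReal.mul_iSup]
  refine iSup_mono fun γ => ?_
  have hdiff : 0 ≤ 1 / p - 1 / s := sub_nonneg.mpr hsp
  calc ENNReal.ofReal γ.1 * volume {x ∈ B | γ.1 < |f x|} ^ (1 / p)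
      = volume {x ∈ B | γ.1 < |f x|} ^ (1 / p - 1 / s) *
          (ENNReal.ofReal γ.1 * volume {x ∈ B | γ.1 < |f x|} ^ (1 / s)) := by
        rw [← sub_add_cancel (1 / p) (1 / s), ENNReal.rpow_add_of_nonneg _ _ hdiff hs,
          sub_add_cancel]
        ring
    _ ≤ volume B ^ (1 / p - 1 / s) *
          (ENNReal.ofReal γ.1 * volume {x ∈ B | γ.1 < |f x|} ^ (1 / s)) := by
        gcongr
        exact Set.sep_subset _ _

end WeakLp

theorem weakLpNorm_prod_le {ι : Type*} [Fintype ι] [Nonempty ι] {n : ℕ} (B : Set (Fin n → ℝ))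
    (f : ι → (Fin n → ℝ) → ℝ) {P : ι → ℝ} {pstar : ℝ} (hP : ∀ i, 0 < P i)
    (hpstar : 1 / pstar = ∑ i, 1 / P i) :
    weakLpNorm pstar B (fun x => ∏ i, f i x) ≤
      ENNReal.ofReal (∏ i, (P i / pstar) ^ (1 / P i)) * ∏ i, weakLpNorm (P i) B (f i) := by
  have hpstar_pos := pos_of_one_div_eq_sum_one_div hP hpstar
  by_cases hzero : ∃ i, weakLpNorm (P i) B (f i) = 0
  · obtain ⟨i, hi⟩ := hzero
    suffices hnull : volume {x ∈ B | ∏ j, f j x ≠ 0} = 0 by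
      rw [(weakLpNorm_eq_zero_iff hpstar_pos).mpr hnull]
      exact zero_le
    refine measure_mono_null ?_ ((weakLpNorm_eq_zero_iff (hP i)).mp hi)
    rintro x ⟨hxB, hx⟩
    exact ⟨hxB, fun hfi => hx (Finset.prod_eq_zero (Finset.mem_univ i) hfi)⟩
  push Not at hzero
  have hC : 0 < ∏ i, (P i / pstar) ^ (1 / P i) :=
    Finset.prod_pos fun i _ => by have := hP i; positivity
  by_cases htop : ∃ i, weakLpNorm (P i) B (f i) = ⊤
  · obtain ⟨i, hi⟩ := htop
    have hprod : ∏ j, weakLpNorm (P j) B (f j) = ⊤ :=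
      WithTop.prod_eq_top (Finset.mem_univ i) hi fun j _ => hzero j
    rw [hprod, ENNReal.mul_top (ENNReal.ofReal_pos.mpr hC).ne']
    exact le_top
  push Not at htop
  set ν : ι → ℝ := fun i => (weakLpNorm (P i) B (f i)).toReal
  have hν : ∀ i, 0 < ν i := fun i => ENNReal.toReal_pos (hzero i) (htop i)
  have hNν : ∀ i, weakLpNorm (P i) B (f i) = ENNReal.ofReal (ν i) := fun i =>
    (ENNReal.ofReal_toReal (htop i)).symm
  rw [Finset.prod_congr rfl fun i _ => hNν i,
    ← ENNReal.ofReal_prod_of_nonneg fun i _ => (hν i).le, ← ENNReal.ofReal_mul hC.le]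
  refine weakLpNorm_le_of_volume_lt_abs_le hpstar_pos (by positivity) fun γ hγ => ?_
  refine (measure_lt_abs_prod_le volume B f hP hν hpstar (fun i γ hγ => ?_) hγ)
  exact volume_lt_abs_le_of_weakLpNorm_le (hP i) (hν i).le hγ (hNν i).le

theorem rpow_mul_weakLpNorm_le_weakMorreyNorm {n : ℕ} (p q : ℝ) (f : (Fin n → ℝ) → ℝ)
    (a : Fin n → ℝ) {r : ℝ} (hr : 0 < r) :
    volume (Metric.ball a r) ^ (1 / q - 1 / p) * weakLpNorm p (Metric.ball a r) f ≤
      weakMorreyNorm p q f :=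
  le_iSup₂ (f := fun (a : Fin n → ℝ) (r : Set.Ioi (0 : ℝ)) =>
    volume (Metric.ball a r.1) ^ (1 / q - 1 / p) * weakLpNorm p (Metric.ball a r.1) f) a ⟨r, hr⟩

theorem holder_weakMorrey_sharp_general {n : ℕ} (m : ℕ)
    (p q pstar : ℝ) (hp : 1 ≤ p) (hpq : p ≤ q)
    (P Q : Fin m → ℝ) (hP : ∀ i, 1 ≤ P i)
    (hpstar : 1 / pstar = ∑ i, 1 / P i)
    (hsumP : ∑ i, 1 / P i ≤ 1 / p)
    (hsumQ : ∑ i, 1 / Q i = 1 / q)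
    (f : Fin m → (Fin n → ℝ) → ℝ) :
    weakMorreyNorm p q (fun x => ∏ i, f i x) ≤
      (∏ i, ENNReal.ofReal ((P i / pstar) ^ (1 / P i))) *
        ∏ i, weakMorreyNorm (P i) (Q i) (f i) := by
  have hP_pos : ∀ i, 0 < P i := fun i => one_pos.trans_le (hP i)
  have : Nonempty (Fin m) := by
    obtain ⟨i, -, -⟩ := Finset.exists_ne_zero_of_sum_ne_zero
      (hsumQ.trans_ne (one_div_pos.mpr (by linarith)).ne')
    exact ⟨i⟩
  have hpstar_pos := pos_of_one_div_eq_sum_one_div hP_pos hpstar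
  rw [← ENNReal.ofReal_prod_of_nonneg fun i _ => by have := hP_pos i; positivity]
  refine iSup₂_le fun a r => ?_
  set B := Metric.ball a r.1
  have hB : volume B ≠ 0 := (Metric.measure_ball_pos volume a r.2).ne'
  have hB' : volume B ≠ ⊤ := measure_ball_lt_top.ne
  calc volume B ^ (1 / q - 1 / p) * weakLpNorm p B (fun x => ∏ i, f i x)
      ≤ volume B ^ (1 / q - 1 / p) *
          (volume B ^ (1 / p - 1 / pstar) * weakLpNorm pstar B (fun x => ∏ i, f i x)) := by
        gcongr
        exact weakLpNorm_le_rpow_mul_weakLpNorm (one_div_pos.mpr hpstar_pos).le (hpstar ▸ hsumP)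
    _ = volume B ^ (∑ i, (1 / Q i - 1 / P i)) * weakLpNorm pstar B (fun x => ∏ i, f i x) := by
        rw [← mul_assoc, ← ENNReal.rpow_add _ _ hB hB', Finset.sum_sub_distrib, hsumQ, ← hpstar,
          sub_add_sub_cancel]
    _ ≤ volume B ^ (∑ i, (1 / Q i - 1 / P i)) *
          (ENNReal.ofReal (∏ i, (P i / pstar) ^ (1 / P i)) * ∏ i, weakLpNorm (P i) B (f i)) := by
        gcongr
        exact weakLpNorm_prod_le B f hP_pos hpstar
    _ = ENNReal.ofReal (∏ i, (P i / pstar) ^ (1 / P i)) *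
          ∏ i, volume B ^ (1 / Q i - 1 / P i) * weakLpNorm (P i) B (f i) := by
        rw [ENNReal.rpow_sum_of_ne_zero_of_ne_top _ hB hB', Finset.prod_mul_distrib]
        ring
    _ ≤ ENNReal.ofReal (∏ i, (P i / pstar) ^ (1 / P i)) *
          ∏ i, weakMorreyNorm (P i) (Q i) (f i) := by
        gcongr with i
        exact rpow_mul_weakLpNorm_le_weakMorreyNorm _ _ _ a r.2

/-- Generalized Hölder's inequality in weak Morrey spaces with a sharper bound:
if `1/p* = Σ 1/pᵢ ≤ 1/p` and `Σ 1/qᵢ = 1/q`, then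
`‖∏ fᵢ‖_{w𝓜^p_q} ≤ ∏ (pᵢ/p*)^{1/pᵢ} ∏ ‖fᵢ‖_{w𝓜^{pᵢ}_{qᵢ}}`. -/
theorem holder_weakMorrey_sharp {n : ℕ} (m : ℕ) (hm : 2 ≤ m)
    (p q pstar : ℝ) (hp : 1 ≤ p) (hpq : p ≤ q)
    (P Q : Fin m → ℝ) (hP : ∀ i, 1 ≤ P i) (hPQ : ∀ i, P i ≤ Q i)
    (hpstar : 1 / pstar = ∑ i, 1 / P i)
    (hsumP : ∑ i, 1 / P i ≤ 1 / p)
    (hsumQ : ∑ i, 1 / Q i = 1 / q)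
    (f : Fin m → (Fin n → ℝ) → ℝ) (hf : ∀ i, Measurable (f i))
    (hmem : ∀ i, weakMorreyNorm (P i) (Q i) (f i) < ∞) :
    weakMorreyNorm p q (fun x => ∏ i, f i x) ≤
      (∏ i, ENNReal.ofReal ((P i / pstar) ^ (1 / P i))) *
        ∏ i, weakMorreyNorm (P i) (Q i) (f i) :=
  holder_weakMorrey_sharp_general m p q pstar hp hpq P Q hP hpstar hsumP hsumQ f
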